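/- Let C and D be Z-type complexes over 𝔽₂, let V (with V₀ = 𝔽₂^m, V₋₁ = 𝔽₂^r, surjective ∂^V) be a common separated logical operator subcomplex of C (determined by u, chain map f) and of D (determined by v, chain map g), let W be the sandwich complex built from ∂^V with left and right inclusions ℓ, ρ : V → W, and let T be the sandwiched complex, T_i = (C_i ⊕ W_i ⊕ D_i)/⟨(f_i s, ℓ_i s, 0), (0, ρ_i s, g_i s) : s ∈ V_i⟩ (with V₁ = 0). Then n_T = n_C + n_D + r, i.e. dim T₀ = dim C₀ + dim D₀ + dim V₋₁, and k_T = k_C + k_D − 1, i.e. dim H₀(T) = dim H₀(C) + dim H₀(D) − 1. -/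
import Mathlib


/-!
STATEMENT 12: For the sandwiched complex T obtained by gluing Z-type
complexes C and D on either side of the sandwich complex W = P ⊗ V built from
a common separated logical operator subcomplex V (V₀ = 𝔽₂^{T0},
V₋₁ = 𝔽₂^{Tm}), one has n_T = n_C + n_D + r and k_T = k_C + k_D − 1.
-/

abbrev F2 := ZMod 2

/-- Coordinate inclusion of 𝔽₂^α into 𝔽₂^β along an embedding ι : α ↪ β. -/
noncomputable def incl {α β : Type} [Fintype α] [DecidableEq β] (ι : α ↪ β) :
    (α → F2) →ₗ[F2] (β → F2) :=
  Matrix.mulVecLin (Matrix.of fun j i => if j = ι i then 1 else 0)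

/-- Degree-0 differential of the sandwich complex W: x ↦ (x, x, ∂^V x). -/
noncomputable def sandD0 {T0 Tm : Type} (dV : (T0 → F2) →ₗ[F2] (Tm → F2)) :
    (T0 → F2) →ₗ[F2] ((T0 → F2) × ((T0 → F2) × (Tm → F2))) :=
  LinearMap.id.prod (LinearMap.id.prod dV)

/-- Degree-(-1) differential of the sandwich complex W:
(a, b, c) ↦ (∂^V a + c, ∂^V b + c). -/
noncomputable def sandDm {T0 Tm : Type} (dV : (T0 → F2) →ₗ[F2] (Tm → F2)) :
    ((T0 → F2) × ((T0 → F2) × (Tm → F2))) →ₗ[F2] ((Tm → F2) × (Tm → F2)) :=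
  ((dV ∘ₗ LinearMap.fst F2 (T0 → F2) ((T0 → F2) × (Tm → F2))) +
      ((LinearMap.snd F2 (T0 → F2) (Tm → F2)) ∘ₗ
        (LinearMap.snd F2 (T0 → F2) ((T0 → F2) × (Tm → F2))))).prod
    ((dV ∘ₗ ((LinearMap.fst F2 (T0 → F2) (Tm → F2)) ∘ₗ
        (LinearMap.snd F2 (T0 → F2) ((T0 → F2) × (Tm → F2))))) +
      ((LinearMap.snd F2 (T0 → F2) (Tm → F2)) ∘ₗ
        (LinearMap.snd F2 (T0 → F2) ((T0 → F2) × (Tm → F2)))))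

/-- Left inclusion ℓ₀ : V₀ → W₀, s ↦ (s, 0, 0). -/
noncomputable def lW0 {T0 Tm : Type} :
    (T0 → F2) →ₗ[F2] ((T0 → F2) × ((T0 → F2) × (Tm → F2))) :=
  LinearMap.id.prod 0

/-- Right inclusion ρ₀ : V₀ → W₀, s ↦ (0, s, 0). -/
noncomputable def rW0 {T0 Tm : Type} :
    (T0 → F2) →ₗ[F2] ((T0 → F2) × ((T0 → F2) × (Tm → F2))) :=
  (0 : (T0 → F2) →ₗ[F2] (T0 → F2)).prod
    (LinearMap.id.prod (0 : (T0 → F2) →ₗ[F2] (Tm → F2)))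

/-- Left inclusion ℓ₋₁ : V₋₁ → W₋₁, t ↦ (t, 0). -/
noncomputable def lWm {Tm : Type} : (Tm → F2) →ₗ[F2] ((Tm → F2) × (Tm → F2)) :=
  LinearMap.id.prod 0

/-- Right inclusion ρ₋₁ : V₋₁ → W₋₁, t ↦ (0, t). -/
noncomputable def rWm {Tm : Type} : (Tm → F2) →ₗ[F2] ((Tm → F2) × (Tm → F2)) :=
  (0 : (Tm → F2) →ₗ[F2] (Tm → F2)).prod LinearMap.id


open Submodule LinearMap Module

section Helpers
variable {K : Type*} [Field K] {M N M' N' : Type*} [AddCommGroup M] [Module K M]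
  [AddCommGroup N] [Module K N] [AddCommGroup M'] [Module K M']
  [AddCommGroup N'] [Module K N']

lemma range_prodMap' (f : M →ₗ[K] N) (g : M' →ₗ[K] N') :
    LinearMap.range (f.prodMap g) = (LinearMap.range f).prod (LinearMap.range g) := by
  ext ⟨x, y⟩
  simp only [LinearMap.mem_range, Submodule.mem_prod, LinearMap.prodMap_apply, Prod.ext_iff]
  constructor
  · rintro ⟨⟨a, b⟩, h1, h2⟩
    exact ⟨⟨a, h1⟩, ⟨b, h2⟩⟩
  · rintro ⟨⟨a, ha⟩, ⟨b, hb⟩⟩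
    exact ⟨(a, b), ha, hb⟩

lemma finrank_submodule_prod (p : Submodule K M) (q : Submodule K N)
    [FiniteDimensional K M] [FiniteDimensional K N] :
    finrank K (p.prod q) = finrank K p + finrank K q := by
  have h : p.prod q = LinearMap.range (p.subtype.prodMap q.subtype) := by
    rw [range_prodMap', Submodule.range_subtype, Submodule.range_subtype]
  have hinj : Function.Injective (p.subtype.prodMap q.subtype) := by
    rw [LinearMap.coe_prodMap]
    exact Function.Injective.prodMap p.injective_subtype q.injective_subtype
  rw [h, LinearMap.finrank_range_of_inj hinj, Module.finrank_prod]

lemma finrank_comap_subtype (S p : Submodule K M) [FiniteDimensional K M] :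
    finrank K (p.comap S.subtype) = finrank K (S ⊓ p : Submodule K M) := by
  rw [← Submodule.map_comap_subtype, Submodule.finrank_map_subtype_eq]

lemma finrank_map_mkQ_add (p S : Submodule K M) [FiniteDimensional K M] :
    finrank K (S.map p.mkQ) + finrank K (p ⊓ S : Submodule K M) = finrank K S := by
  have h1 : S.map p.mkQ = LinearMap.range (p.mkQ ∘ₗ S.subtype) := by
    rw [LinearMap.range_comp, Submodule.range_subtype]
  have h2 := LinearMap.finrank_range_add_finrank_ker (p.mkQ ∘ₗ S.subtype)
  rw [LinearMap.ker_comp, Submodule.ker_mkQ, finrank_comap_subtype, inf_comm] at h2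
  rw [h1]
  exact h2

lemma finrank_map_of_injective (f : M →ₗ[K] N) (hf : Function.Injective f)
    (p : Submodule K M) [FiniteDimensional K M] :
    finrank K (p.map f) = finrank K p :=
  (LinearEquiv.finrank_eq (Submodule.equivMapOfInjective f hf p)).symm

lemma finrank_sup_inj (f : M →ₗ[K] N) (g : M' →ₗ[K] N)
    (hf : Function.Injective f) (hg : Function.Injective g)
    (h : LinearMap.range f ⊓ LinearMap.range g = ⊥)
    [FiniteDimensional K M] [FiniteDimensional K M'] [FiniteDimensional K N] :
    finrank K (LinearMap.range f ⊔ LinearMap.range g : Submodule K N) =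
      finrank K M + finrank K M' := by
  have := Submodule.finrank_sup_add_finrank_inf_eq (LinearMap.range f) (LinearMap.range g)
  rw [h, finrank_bot, add_zero, LinearMap.finrank_range_of_inj hf,
    LinearMap.finrank_range_of_inj hg] at this
  exact this

end Helpers

lemma add_self_mod2 {M : Type*} [AddCommGroup M] [Module F2 M] (x : M) : x + x = 0 := by
  have : x + x = ((1 : F2) + 1) • x := by rw [add_smul, one_smul]
  rw [this, show (1 : F2) + 1 = 0 by decide, zero_smul]

lemma sub_eq_add_mod2 {M : Type*} [AddCommGroup M] [Module F2 M] (x y : M) :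
    x - y = x + y := by
  rw [sub_eq_add_neg, neg_eq_of_add_eq_zero_left (add_self_mod2 y)]

set_option maxHeartbeats 2000000 in
theorem aux_sandwich
    {C1 C0 Cm D1 D0 Dm V0 Vm : Type*}
    [AddCommGroup C1] [Module F2 C1] [FiniteDimensional F2 C1]
    [AddCommGroup C0] [Module F2 C0] [FiniteDimensional F2 C0]
    [AddCommGroup Cm] [Module F2 Cm] [FiniteDimensional F2 Cm]
    [AddCommGroup D1] [Module F2 D1] [FiniteDimensional F2 D1]
    [AddCommGroup D0] [Module F2 D0] [FiniteDimensional F2 D0]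
    [AddCommGroup Dm] [Module F2 Dm] [FiniteDimensional F2 Dm]
    [AddCommGroup V0] [Module F2 V0] [FiniteDimensional F2 V0]
    [AddCommGroup Vm] [Module F2 Vm] [FiniteDimensional F2 Vm]
    (dC0 : C1 →ₗ[F2] C0) (dCm : C0 →ₗ[F2] Cm)
    (dD0 : D1 →ₗ[F2] D0) (dDm : D0 →ₗ[F2] Dm)
    (hC : dCm ∘ₗ dC0 = 0) (hD : dDm ∘ₗ dD0 = 0)
    (iC : V0 →ₗ[F2] C0) (iD : V0 →ₗ[F2] D0)
    (fm : Vm →ₗ[F2] Cm) (gm : Vm →ₗ[F2] Dm)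
    (hfm : Function.Injective fm) (hgm : Function.Injective gm)
    (dV : V0 →ₗ[F2] Vm) (hdV : Function.Surjective dV)
    (hfC : dCm ∘ₗ iC = fm ∘ₗ dV) (hgD : dDm ∘ₗ iD = gm ∘ₗ dV)
    (u : V0) (hdVu : dV u = 0) (hu' : iC u ∉ LinearMap.range dC0)
    (hsepC : ∀ s : V0, dV s = 0 → iC s ∉ LinearMap.range dC0 →
      iC s + iC u ∈ LinearMap.range dC0)
    (hsep3 : ∀ s : V0, dV s = 0 → iC s ∈ LinearMap.range dC0 →
      iD s ∈ LinearMap.range dD0)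
    (φ0C : V0 →ₗ[F2] (C0 × ((V0 × (V0 × Vm)) × D0)))
    (hφ0C : ∀ s, φ0C s = (iC s, ((s, (0, 0)), 0)))
    (φ0D : V0 →ₗ[F2] (C0 × ((V0 × (V0 × Vm)) × D0)))
    (hφ0D : ∀ s, φ0D s = (0, ((0, (s, 0)), iD s)))
    (φmC : Vm →ₗ[F2] (Cm × ((Vm × Vm) × Dm)))
    (hφmC : ∀ t, φmC t = (fm t, ((t, 0), 0)))
    (φmD : Vm →ₗ[F2] (Cm × ((Vm × Vm) × Dm)))
    (hφmD : ∀ t, φmD t = (0, ((0, t), gm t)))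
    (sD0 : V0 →ₗ[F2] (V0 × (V0 × Vm)))
    (hsD0 : ∀ x, sD0 x = (x, (x, dV x)))
    (sDm : (V0 × (V0 × Vm)) →ₗ[F2] (Vm × Vm))
    (hsDm : ∀ x, sDm x = (dV x.1 + x.2.2, dV x.2.1 + x.2.2))
    (dTm : ((C0 × ((V0 × (V0 × Vm)) × D0)) ⧸
        (LinearMap.range φ0C ⊔ LinearMap.range φ0D)) →ₗ[F2]
      ((Cm × ((Vm × Vm) × Dm)) ⧸ (LinearMap.range φmC ⊔ LinearMap.range φmD)))
    (hdTm : dTm ∘ₗ (LinearMap.range φ0C ⊔ LinearMap.range φ0D).mkQ =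
      (LinearMap.range φmC ⊔ LinearMap.range φmD).mkQ ∘ₗ (dCm.prodMap (sDm.prodMap dDm))) :
    Module.finrank F2
        ((C0 × ((V0 × (V0 × Vm)) × D0)) ⧸ (LinearMap.range φ0C ⊔ LinearMap.range φ0D)) =
      Module.finrank F2 C0 + Module.finrank F2 D0 + Module.finrank F2 Vm ∧
    Module.finrank F2
        (LinearMap.ker dTm ⧸
          ((LinearMap.range ((LinearMap.range φ0C ⊔ LinearMap.range φ0D).mkQ ∘ₗ
              (dC0.prodMap (sD0.prodMap dD0)))).comap (LinearMap.ker dTm).subtype :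
            Submodule F2 (LinearMap.ker dTm))) + 1 =
      Module.finrank F2
          (LinearMap.ker dCm ⧸
            ((LinearMap.range dC0).comap (LinearMap.ker dCm).subtype :
              Submodule F2 (LinearMap.ker dCm))) +
        Module.finrank F2
          (LinearMap.ker dDm ⧸
            ((LinearMap.range dD0).comap (LinearMap.ker dDm).subtype :
              Submodule F2 (LinearMap.ker dDm))) := by

  classical
  -- Part 1 : dimension of T0
  have hinjφ0C : Function.Injective φ0C := by
    intro a b h
    rw [hφ0C, hφ0C] at h
    exact congrArg (fun y => y.2.1.1) h
  have hinjφ0D : Function.Injective φ0D := by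
    intro a b h
    rw [hφ0D, hφ0D] at h
    exact congrArg (fun y => y.2.1.2.1) h
  have hinf0 : LinearMap.range φ0C ⊓ LinearMap.range φ0D = ⊥ := by
    rw [eq_bot_iff]
    rintro x ⟨⟨s, hs⟩, ⟨t, ht⟩⟩
    rw [hφ0C] at hs
    rw [hφ0D] at ht
    have h1 : s = x.2.1.1 := congrArg (fun y => y.2.1.1) hs
    have h2 : (0 : V0) = x.2.1.1 := congrArg (fun y => y.2.1.1) ht
    have hs0 : s = 0 := by rw [h1, ← h2]
    rw [Submodule.mem_bot, ← hs, hs0]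
    simp
  have hR0rank : finrank F2 ↥(LinearMap.range φ0C ⊔ LinearMap.range φ0D) = finrank F2 V0 + finrank F2 V0 :=
    finrank_sup_inj φ0C φ0D hinjφ0C hinjφ0D hinf0
  have hM0rank : finrank F2 (C0 × ((V0 × (V0 × Vm)) × D0)) =
      finrank F2 C0 + ((finrank F2 V0 + (finrank F2 V0 + finrank F2 Vm)) + finrank F2 D0) := by
    rw [Module.finrank_prod, Module.finrank_prod, Module.finrank_prod, Module.finrank_prod]
  have hpart1 : finrank F2 ((C0 × ((V0 × (V0 × Vm)) × D0)) ⧸ (LinearMap.range φ0C ⊔ LinearMap.range φ0D)) =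
      finrank F2 C0 + finrank F2 D0 + finrank F2 Vm := by
    have h := Submodule.finrank_quotient_add_finrank (LinearMap.range φ0C ⊔ LinearMap.range φ0D)
    rw [hR0rank, hM0rank] at h
    omega
  refine ⟨hpart1, ?_⟩
  -- basic facts
  have hfC' : ∀ s, dCm (iC s) = fm (dV s) := fun s => LinearMap.congr_fun hfC s
  have hgD' : ∀ s, dDm (iD s) = gm (dV s) := fun s => LinearMap.congr_fun hgD s
  -- the diagonal kernel submodule Kd
  set Kd : Submodule F2 V0 := (LinearMap.ker dV ⊓ (LinearMap.range dC0).comap iC) ⊓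
      (LinearMap.range dD0).comap iD with hKddef
  have hKeq : Kd = LinearMap.ker dV ⊓ (LinearMap.range dC0).comap iC := by
    apply le_antisymm inf_le_left
    intro s hs
    obtain ⟨hs1, hs2⟩ := Submodule.mem_inf.mp hs
    exact Submodule.mem_inf.mpr ⟨hs, hsep3 s (LinearMap.mem_ker.mp hs1) hs2⟩
  -- the map to H0(C)
  set ψ : ↥(LinearMap.ker dV) →ₗ[F2] (C0 ⧸ LinearMap.range dC0) :=
    (LinearMap.range dC0).mkQ ∘ₗ (iC ∘ₗ (LinearMap.ker dV).subtype) with hψdef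
  have hψapp : ∀ s : ↥(LinearMap.ker dV), ψ s = (LinearMap.range dC0).mkQ (iC s.1) :=
    fun s => rfl
  have hψker : LinearMap.ker ψ =
      (((LinearMap.range dC0).comap iC).comap (LinearMap.ker dV).subtype) := by
    ext x
    simp only [LinearMap.mem_ker, hψapp, Submodule.mkQ_apply, Submodule.Quotient.mk_eq_zero,
      Submodule.mem_comap, Submodule.coe_subtype]
  have humem : u ∈ LinearMap.ker dV := LinearMap.mem_ker.mpr hdVu
  have hune : (LinearMap.range dC0).mkQ (iC u) ≠ 0 := by
    rw [Submodule.mkQ_apply, ne_eq, Submodule.Quotient.mk_eq_zero]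
    exact hu'
  have hψrange : LinearMap.range ψ =
      Submodule.span F2 {(LinearMap.range dC0).mkQ (iC u)} := by
    apply le_antisymm
    · rintro x ⟨⟨s, hs⟩, rfl⟩
      by_cases hmem : iC s ∈ LinearMap.range dC0
      · have h0 : (LinearMap.range dC0).mkQ (iC s) = 0 :=
          (Submodule.Quotient.mk_eq_zero _).mpr hmem
        show (LinearMap.range dC0).mkQ (iC s) ∈ _
        rw [h0]
        exact Submodule.zero_mem _
      · have hplus := hsepC s (LinearMap.mem_ker.mp hs) hmem
        have heq : (LinearMap.range dC0).mkQ (iC s) = (LinearMap.range dC0).mkQ (iC u) := by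
          rw [Submodule.mkQ_apply, Submodule.mkQ_apply, Submodule.Quotient.eq,
            sub_eq_add_mod2]
          exact hplus
        show (LinearMap.range dC0).mkQ (iC s) ∈ _
        rw [heq]
        exact Submodule.mem_span_singleton_self _
    · rw [Submodule.span_le, Set.singleton_subset_iff]
      exact ⟨⟨u, humem⟩, rfl⟩
  have hψrank : finrank F2 (LinearMap.range ψ) = 1 := by
    rw [hψrange]
    exact finrank_span_singleton hune
  have hrnψ := LinearMap.finrank_range_add_finrank_ker ψ
  have hKdrank : finrank F2 Kd + 1 = finrank F2 (LinearMap.ker dV) := by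
    have h1 : finrank F2 (LinearMap.ker ψ) = finrank F2 Kd := by
      rw [hψker, finrank_comap_subtype, ← hKeq]
    omega
  -- surjectivity of sDm
  have hsDmsurj : LinearMap.range sDm = ⊤ := by
    rw [LinearMap.range_eq_top]
    rintro ⟨p, q⟩
    obtain ⟨a, ha⟩ := hdV (p + q)
    refine ⟨(a, (0, q)), ?_⟩
    rw [hsDm]
    show (dV a + q, dV (0 : V0) + q) = (p, q)
    rw [ha, map_zero, zero_add, add_assoc, add_self_mod2, add_zero]
  have hrangeDm : LinearMap.range (dCm.prodMap (sDm.prodMap dDm)) =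
      (LinearMap.range dCm).prod
        ((⊤ : Submodule F2 (Vm × Vm)).prod (LinearMap.range dDm)) := by
    rw [range_prodMap', range_prodMap', hsDmsurj]
  have hRmle : (LinearMap.range φmC ⊔ LinearMap.range φmD) ≤ LinearMap.range (dCm.prodMap (sDm.prodMap dDm)) := by
    rw [hrangeDm]
    apply sup_le
    · rintro x ⟨t, rfl⟩
      rw [hφmC]
      obtain ⟨s, hs⟩ := hdV t
      exact Submodule.mem_prod.mpr ⟨⟨iC s, by rw [hfC' s, hs]⟩,
        Submodule.mem_prod.mpr ⟨Submodule.mem_top, ⟨0, map_zero _⟩⟩⟩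
    · rintro x ⟨t, rfl⟩
      rw [hφmD]
      obtain ⟨s, hs⟩ := hdV t
      exact Submodule.mem_prod.mpr ⟨⟨0, map_zero _⟩,
        Submodule.mem_prod.mpr ⟨Submodule.mem_top, ⟨iD s, by rw [hgD' s, hs]⟩⟩⟩
  have hinjφmC : Function.Injective φmC := by
    intro a b h
    rw [hφmC, hφmC] at h
    exact congrArg (fun y => y.2.1.1) h
  have hinjφmD : Function.Injective φmD := by
    intro a b h
    rw [hφmD, hφmD] at h
    exact congrArg (fun y => y.2.1.2) h
  have hinfm : LinearMap.range φmC ⊓ LinearMap.range φmD = ⊥ := by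
    rw [eq_bot_iff]
    intro x hx
    obtain ⟨hx1, hx2⟩ := Submodule.mem_inf.mp hx
    obtain ⟨s, hs⟩ := hx1
    obtain ⟨t, ht⟩ := hx2
    rw [hφmC] at hs
    rw [hφmD] at ht
    have h1 : s = x.2.1.1 := congrArg (fun y => y.2.1.1) hs
    have h2 : (0 : Vm) = x.2.1.1 := congrArg (fun y => y.2.1.1) ht
    have hs0 : s = 0 := by rw [h1, ← h2]
    rw [Submodule.mem_bot, ← hs, hs0]
    simp
  have hRmrank : finrank F2 ↥(LinearMap.range φmC ⊔ LinearMap.range φmD) = finrank F2 Vm + finrank F2 Vm :=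
    finrank_sup_inj φmC φmD hinjφmC hinjφmD hinfm
  have hrangeDmrank : finrank F2 (LinearMap.range (dCm.prodMap (sDm.prodMap dDm))) =
      finrank F2 (LinearMap.range dCm) + ((finrank F2 Vm + finrank F2 Vm) +
        finrank F2 (LinearMap.range dDm)) := by
    rw [hrangeDm, finrank_submodule_prod, finrank_submodule_prod, finrank_top,
      Module.finrank_prod]
  have hdTmrange : LinearMap.range dTm =
      (LinearMap.range (dCm.prodMap (sDm.prodMap dDm))).map (LinearMap.range φmC ⊔ LinearMap.range φmD).mkQ := by
    have h := congrArg LinearMap.range hdTm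
    rwa [LinearMap.range_comp, LinearMap.range_comp, Submodule.range_mkQ,
      Submodule.map_top] at h
  have hdTmrank : finrank F2 (LinearMap.range dTm) + (finrank F2 Vm + finrank F2 Vm) =
      finrank F2 (LinearMap.range dCm) + ((finrank F2 Vm + finrank F2 Vm) +
        finrank F2 (LinearMap.range dDm)) := by
    have h := finrank_map_mkQ_add (LinearMap.range φmC ⊔ LinearMap.range φmD) (LinearMap.range (dCm.prodMap (sDm.prodMap dDm)))
    rw [inf_eq_left.mpr hRmle, hRmrank, hrangeDmrank] at h
    rw [hdTmrange]
    exact h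
  have hrnT := LinearMap.finrank_range_add_finrank_ker dTm
  -- degree-0 boundary analysis
  have hD0app : ∀ y : C1 × (V0 × D1), (dC0.prodMap (sD0.prodMap dD0)) y =
      (dC0 y.1, ((y.2.1, (y.2.1, dV y.2.1)), dD0 y.2.2)) := by
    intro y
    simp only [LinearMap.prodMap_apply, hsD0]
  have hsum0 : ∀ s t, φ0C s + φ0D t = (iC s, ((s, (t, 0)), iD t)) := by
    intro s t
    simp only [hφ0C, hφ0D, Prod.mk_add_mk, add_zero, zero_add]
  have hsD0inj : Function.Injective sD0 := by
    intro a b h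
    rw [hsD0, hsD0] at h
    exact congrArg (fun y => y.1) h
  have hrangeD0 : LinearMap.range (dC0.prodMap (sD0.prodMap dD0)) =
      (LinearMap.range dC0).prod ((LinearMap.range sD0).prod (LinearMap.range dD0)) := by
    rw [range_prodMap', range_prodMap']
  have hrangeD0rank : finrank F2 (LinearMap.range (dC0.prodMap (sD0.prodMap dD0))) =
      finrank F2 (LinearMap.range dC0) +
        (finrank F2 V0 + finrank F2 (LinearMap.range dD0)) := by
    rw [hrangeD0, finrank_submodule_prod, finrank_submodule_prod,
      LinearMap.finrank_range_of_inj hsD0inj]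
  set δ : V0 →ₗ[F2] (C0 × ((V0 × (V0 × Vm)) × D0)) := φ0C + φ0D with hδdef
  have hδapp : ∀ s, δ s = (iC s, ((s, (s, 0)), iD s)) := by
    intro s
    show φ0C s + φ0D s = _
    rw [hsum0]
  have hδinj : Function.Injective δ := by
    intro a b h
    rw [hδapp, hδapp] at h
    exact congrArg (fun y => y.2.1.1) h
  have hGeq : LinearMap.range (dC0.prodMap (sD0.prodMap dD0)) ⊓
      (LinearMap.range φ0C ⊔ LinearMap.range φ0D) = Kd.map δ := by
    apply le_antisymm
    · intro x hx
      obtain ⟨hx1, hx2⟩ := Submodule.mem_inf.mp hx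
      obtain ⟨y, hy, z, hz, rfl⟩ := Submodule.mem_sup.mp hx2
      obtain ⟨s, rfl⟩ := hy
      obtain ⟨t, rfl⟩ := hz
      obtain ⟨⟨a, w, b⟩, hab⟩ := hx1
      rw [hD0app, hsum0] at hab
      have e1 : dC0 a = iC s := congrArg (fun y => y.1) hab
      have e2 : w = s := congrArg (fun y => y.2.1.1) hab
      have e3 : w = t := congrArg (fun y => y.2.1.2.1) hab
      have e4 : dV w = 0 := congrArg (fun y => y.2.1.2.2) hab
      have e5 : dD0 b = iD t := congrArg (fun y => y.2.2) hab
      have hts : t = s := by rw [← e3, e2]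
      have hsK : s ∈ Kd := by
        refine Submodule.mem_inf.mpr ⟨Submodule.mem_inf.mpr ⟨?_, ?_⟩, ?_⟩
        · exact LinearMap.mem_ker.mpr (by rw [← e2]; exact e4)
        · exact ⟨a, e1⟩
        · exact ⟨b, by rw [e5, hts]⟩
      refine Submodule.mem_map.mpr ⟨s, hsK, ?_⟩
      rw [hts]
      rfl
    · intro x hx
      obtain ⟨s, hsK, rfl⟩ := Submodule.mem_map.mp hx
      obtain ⟨hs12, hs3⟩ := Submodule.mem_inf.mp hsK
      obtain ⟨hs1, hs2⟩ := Submodule.mem_inf.mp hs12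
      obtain ⟨a, ha⟩ := hs2
      obtain ⟨b, hb⟩ := hs3
      refine Submodule.mem_inf.mpr ⟨?_, ?_⟩
      · refine ⟨(a, (s, b)), ?_⟩
        rw [hD0app, hδapp]
        show (dC0 a, ((s, (s, dV s)), dD0 b)) = _
        rw [ha, hb, LinearMap.mem_ker.mp hs1]
      · have hds : δ s = φ0C s + φ0D s := rfl
        rw [hds]
        exact Submodule.add_mem _ (Submodule.mem_sup_left ⟨s, rfl⟩)
          (Submodule.mem_sup_right ⟨s, rfl⟩)
  have hBrrank : finrank F2 (LinearMap.range
        ((LinearMap.range φ0C ⊔ LinearMap.range φ0D).mkQ ∘ₗ (dC0.prodMap (sD0.prodMap dD0)))) +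
      finrank F2 Kd =
      finrank F2 (LinearMap.range dC0) +
        (finrank F2 V0 + finrank F2 (LinearMap.range dD0)) := by
    have h := finrank_map_mkQ_add (LinearMap.range φ0C ⊔ LinearMap.range φ0D)
      (LinearMap.range (dC0.prodMap (sD0.prodMap dD0)))
    rw [show ((LinearMap.range φ0C ⊔ LinearMap.range φ0D) ⊓
        LinearMap.range (dC0.prodMap (sD0.prodMap dD0))) = Kd.map δ by
        rw [inf_comm]; exact hGeq,
      finrank_map_of_injective δ hδinj, hrangeD0rank, ← LinearMap.range_comp] at h
    exact h
  -- the boundary lands in the kernel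
  have hDD : (dCm.prodMap (sDm.prodMap dDm)) ∘ₗ (dC0.prodMap (sD0.prodMap dD0)) = 0 := by
    apply LinearMap.ext
    rintro ⟨a, w, b⟩
    rw [LinearMap.comp_apply, hD0app]
    show (dCm (dC0 a), (sDm ((w, (w, dV w)) : V0 × (V0 × Vm)), dDm (dD0 b))) = 0
    rw [hsDm]
    have h1 : dCm (dC0 a) = 0 := LinearMap.congr_fun hC a
    have h2 : dDm (dD0 b) = 0 := LinearMap.congr_fun hD b
    show (dCm (dC0 a), ((dV w + dV w, dV w + dV w), dDm (dD0 b))) = 0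
    rw [h1, h2, add_self_mod2]
    rfl
  have hzero : dTm ∘ₗ ((LinearMap.range φ0C ⊔ LinearMap.range φ0D).mkQ ∘ₗ
      (dC0.prodMap (sD0.prodMap dD0))) = 0 := by
    rw [← LinearMap.comp_assoc, hdTm, LinearMap.comp_assoc, hDD, LinearMap.comp_zero]
  have hBrle : LinearMap.range ((LinearMap.range φ0C ⊔ LinearMap.range φ0D).mkQ ∘ₗ
      (dC0.prodMap (sD0.prodMap dD0))) ≤ LinearMap.ker dTm :=
    LinearMap.range_le_ker_iff.mpr hzero
  -- quotient dimension identities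
  have hqT := Submodule.finrank_quotient_add_finrank
    ((LinearMap.range ((LinearMap.range φ0C ⊔ LinearMap.range φ0D).mkQ ∘ₗ
      (dC0.prodMap (sD0.prodMap dD0)))).comap (LinearMap.ker dTm).subtype)
  have hcomapT : finrank F2 ((LinearMap.range ((LinearMap.range φ0C ⊔ LinearMap.range φ0D).mkQ ∘ₗ
        (dC0.prodMap (sD0.prodMap dD0)))).comap (LinearMap.ker dTm).subtype) =
      finrank F2 (LinearMap.range ((LinearMap.range φ0C ⊔ LinearMap.range φ0D).mkQ ∘ₗ
        (dC0.prodMap (sD0.prodMap dD0)))) := by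
    rw [finrank_comap_subtype, inf_eq_right.mpr hBrle]
  have hrangeC0le : LinearMap.range dC0 ≤ LinearMap.ker dCm :=
    LinearMap.range_le_ker_iff.mpr hC
  have hrangeD0le : LinearMap.range dD0 ≤ LinearMap.ker dDm :=
    LinearMap.range_le_ker_iff.mpr hD
  have hqC := Submodule.finrank_quotient_add_finrank
    ((LinearMap.range dC0).comap (LinearMap.ker dCm).subtype)
  have hcomapC : finrank F2 ((LinearMap.range dC0).comap (LinearMap.ker dCm).subtype) =
      finrank F2 (LinearMap.range dC0) := by
    rw [finrank_comap_subtype, inf_eq_right.mpr hrangeC0le]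
  have hqD := Submodule.finrank_quotient_add_finrank
    ((LinearMap.range dD0).comap (LinearMap.ker dDm).subtype)
  have hcomapD : finrank F2 ((LinearMap.range dD0).comap (LinearMap.ker dDm).subtype) =
      finrank F2 (LinearMap.range dD0) := by
    rw [finrank_comap_subtype, inf_eq_right.mpr hrangeD0le]
  have hrnC := LinearMap.finrank_range_add_finrank_ker dCm
  have hrnD := LinearMap.finrank_range_add_finrank_ker dDm
  have hrnV := LinearMap.finrank_range_add_finrank_ker dV
  have hdVtop : finrank F2 (LinearMap.range dV) = finrank F2 Vm := by
    rw [LinearMap.range_eq_top.mpr hdV, finrank_top]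
  omega

lemma incl_apply_emb {α β : Type} [Fintype α] [DecidableEq α] [DecidableEq β] (ι : α ↪ β)
    (s : α → F2) (i : α) : incl ι s (ι i) = s i := by
  simp only [incl, Matrix.mulVecLin_apply, Matrix.mulVec, dotProduct, Matrix.of_apply]
  rw [Finset.sum_eq_single i]
  · simp
  · intro b _ hb
    simp [ι.injective.ne (Ne.symm hb)]
  · simp

lemma incl_apply_not {α β : Type} [Fintype α] [DecidableEq β] (ι : α ↪ β)
    (s : α → F2) (j : β) (hj : ∀ i, j ≠ ι i) : incl ι s j = 0 := by
  simp only [incl, Matrix.mulVecLin_apply, Matrix.mulVec, dotProduct, Matrix.of_apply]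
  apply Finset.sum_eq_zero
  intro i _
  simp [hj i]

lemma incl_injective {α β : Type} [Fintype α] [DecidableEq α] [DecidableEq β] (ι : α ↪ β) :
    Function.Injective (incl ι) := by
  intro s t h
  funext i
  have := congrFun h (ι i)
  rwa [incl_apply_emb, incl_apply_emb] at this


set_option maxHeartbeats 8000000 in
theorem sandwiched_code_dims_helper
    {SC1 SC0 SCm SD1 SD0 SDm T0 Tm : Type}
    [Fintype SC1] [Fintype SC0] [Fintype SCm]
    [Fintype SD1] [Fintype SD0] [Fintype SDm] [Fintype T0] [Fintype Tm]
    [DecidableEq SC0] [DecidableEq SD0] [DecidableEq T0]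
    (dC0 : (SC1 → F2) →ₗ[F2] (SC0 → F2)) (dCm : (SC0 → F2) →ₗ[F2] (SCm → F2))
    (dD0 : (SD1 → F2) →ₗ[F2] (SD0 → F2)) (dDm : (SD0 → F2) →ₗ[F2] (SDm → F2))
    (hC : dCm ∘ₗ dC0 = 0) (hD : dDm ∘ₗ dD0 = 0)
    (ιC : T0 ↪ SC0) (ιD : T0 ↪ SD0)
    (hu : incl ιC 1 ∈ LinearMap.ker dCm) (hu' : incl ιC 1 ∉ LinearMap.range dC0)
    (hv : incl ιD 1 ∈ LinearMap.ker dDm) (hv' : incl ιD 1 ∉ LinearMap.range dD0)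
    (fm : (Tm → F2) →ₗ[F2] (SCm → F2)) (gm : (Tm → F2) →ₗ[F2] (SDm → F2))
    (hfm : Function.Injective fm) (hgm : Function.Injective gm)
    (dV : (T0 → F2) →ₗ[F2] (Tm → F2)) (hdV : Function.Surjective dV)
    (hfC : dCm ∘ₗ incl ιC = fm ∘ₗ dV)
    (hgD : dDm ∘ₗ incl ιD = gm ∘ₗ dV)
    (hsepC : ∀ u' : SC0 → F2, u' ∈ LinearMap.ker dCm → u' ∉ LinearMap.range dC0 →
      (∀ j, u' j ≠ 0 → incl ιC 1 j ≠ 0) → u' + incl ιC 1 ∈ LinearMap.range dC0)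
    (hsepD : ∀ v' : SD0 → F2, v' ∈ LinearMap.ker dDm → v' ∉ LinearMap.range dD0 →
      (∀ j, v' j ≠ 0 → incl ιD 1 j ≠ 0) → v' + incl ιD 1 ∈ LinearMap.range dD0)
    (hsep3 : ∀ s : T0 → F2,
      (incl ιC s ∈ LinearMap.ker dCm ∧ incl ιC s ∉ LinearMap.range dC0) ↔
      (incl ιD s ∈ LinearMap.ker dDm ∧ incl ιD s ∉ LinearMap.range dD0))
    (dTm : (((SC0 → F2) × ((((T0 → F2) × ((T0 → F2) × (Tm → F2)))) × (SD0 → F2))) ⧸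
        (LinearMap.range ((incl ιC).prod (lW0.prod (0 : (T0 → F2) →ₗ[F2] (SD0 → F2)))) ⊔
         LinearMap.range ((0 : (T0 → F2) →ₗ[F2] (SC0 → F2)).prod (rW0.prod (incl ιD))))) →ₗ[F2]
      (((SCm → F2) × ((((Tm → F2) × (Tm → F2))) × (SDm → F2))) ⧸
        (LinearMap.range (fm.prod (lWm.prod (0 : (Tm → F2) →ₗ[F2] (SDm → F2)))) ⊔
         LinearMap.range ((0 : (Tm → F2) →ₗ[F2] (SCm → F2)).prod (rWm.prod gm)))))
    (hdTm : dTm ∘ₗ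
        (LinearMap.range ((incl ιC).prod (lW0.prod (0 : (T0 → F2) →ₗ[F2] (SD0 → F2)))) ⊔
         LinearMap.range ((0 : (T0 → F2) →ₗ[F2] (SC0 → F2)).prod (rW0.prod (incl ιD)))).mkQ =
      (LinearMap.range (fm.prod (lWm.prod (0 : (Tm → F2) →ₗ[F2] (SDm → F2)))) ⊔
         LinearMap.range ((0 : (Tm → F2) →ₗ[F2] (SCm → F2)).prod (rWm.prod gm))).mkQ ∘ₗ
        (dCm.prodMap ((sandDm dV).prodMap dDm))) :
    Module.finrank F2
        (((SC0 → F2) × ((((T0 → F2) × ((T0 → F2) × (Tm → F2)))) × (SD0 → F2))) ⧸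
          (LinearMap.range ((incl ιC).prod (lW0.prod (0 : (T0 → F2) →ₗ[F2] (SD0 → F2)))) ⊔
           LinearMap.range ((0 : (T0 → F2) →ₗ[F2] (SC0 → F2)).prod (rW0.prod (incl ιD))))) =
      Fintype.card SC0 + Fintype.card SD0 + Fintype.card Tm ∧
    Module.finrank F2
        (LinearMap.ker dTm ⧸
          ((LinearMap.range
              ((LinearMap.range ((incl ιC).prod (lW0.prod (0 : (T0 → F2) →ₗ[F2] (SD0 → F2)))) ⊔
                LinearMap.range ((0 : (T0 → F2) →ₗ[F2] (SC0 → F2)).prod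
                  (rW0.prod (incl ιD)))).mkQ ∘ₗ
              (dC0.prodMap ((sandD0 dV).prodMap dD0)))).comap
            (LinearMap.ker dTm).subtype :
            Submodule F2 (LinearMap.ker dTm))) + 1 =
      Module.finrank F2
          (LinearMap.ker dCm ⧸
            ((LinearMap.range dC0).comap (LinearMap.ker dCm).subtype :
              Submodule F2 (LinearMap.ker dCm))) +
        Module.finrank F2
          (LinearMap.ker dDm ⧸
            ((LinearMap.range dD0).comap (LinearMap.ker dDm).subtype :
              Submodule F2 (LinearMap.ker dDm))) := by
  classical
  have hfC' : ∀ s, dCm (incl ιC s) = fm (dV s) := fun s => LinearMap.congr_fun hfC s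
  have hgD' : ∀ s, dDm (incl ιD s) = gm (dV s) := fun s => LinearMap.congr_fun hgD s
  have hdVu : dV 1 = 0 := by
    apply hfm
    rw [map_zero, ← hfC' 1]
    exact LinearMap.mem_ker.mp hu
  have hsepC' : ∀ s : T0 → F2, dV s = 0 → incl ιC s ∉ LinearMap.range dC0 →
      incl ιC s + incl ιC 1 ∈ LinearMap.range dC0 := by
    intro s hs hmem
    refine hsepC (incl ιC s) (LinearMap.mem_ker.mpr (by rw [hfC' s, hs, map_zero])) hmem ?_
    intro j hj
    by_cases hr : ∃ i, j = ιC i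
    · obtain ⟨i, rfl⟩ := hr
      rw [incl_apply_emb, Pi.one_apply]
      exact one_ne_zero
    · exact absurd (incl_apply_not ιC s j (fun i h => hr ⟨i, h⟩)) hj
  have hsep3' : ∀ s : T0 → F2, dV s = 0 → incl ιC s ∈ LinearMap.range dC0 →
      incl ιD s ∈ LinearMap.range dD0 := by
    intro s hs hmem
    by_contra hcon
    have hker : incl ιD s ∈ LinearMap.ker dDm :=
      LinearMap.mem_ker.mpr (by rw [hgD' s, hs, map_zero])
    exact ((hsep3 s).mpr ⟨hker, hcon⟩).2 hmem
  obtain ⟨h1, h2⟩ := aux_sandwich dC0 dCm dD0 dDm hC hD (incl ιC) (incl ιD) fm gm hfm hgm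
    dV hdV hfC hgD 1 hdVu hu' hsepC' hsep3'
    ((incl ιC).prod (lW0.prod (0 : (T0 → F2) →ₗ[F2] (SD0 → F2)))) (fun s => rfl)
    ((0 : (T0 → F2) →ₗ[F2] (SC0 → F2)).prod (rW0.prod (incl ιD))) (fun s => rfl)
    (fm.prod (lWm.prod (0 : (Tm → F2) →ₗ[F2] (SDm → F2)))) (fun t => rfl)
    ((0 : (Tm → F2) →ₗ[F2] (SCm → F2)).prod (rWm.prod gm)) (fun t => rfl)
    (sandD0 dV) (fun x => rfl)
    (sandDm dV) (fun x => rfl)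
    dTm hdTm
  refine ⟨?_, h2⟩
  rw [h1, Module.finrank_fintype_fun_eq_card, Module.finrank_fintype_fun_eq_card,
    Module.finrank_fintype_fun_eq_card]

set_option maxHeartbeats 1000000 in
theorem sandwiched_code_dims
    {SC1 SC0 SCm SD1 SD0 SDm T0 Tm : Type}
    [Fintype SC1] [Fintype SC0] [Fintype SCm]
    [Fintype SD1] [Fintype SD0] [Fintype SDm] [Fintype T0] [Fintype Tm]
    [DecidableEq SC0] [DecidableEq SD0] [DecidableEq T0]
    (dC0 : (SC1 → F2) →ₗ[F2] (SC0 → F2)) (dCm : (SC0 → F2) →ₗ[F2] (SCm → F2))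
    (dD0 : (SD1 → F2) →ₗ[F2] (SD0 → F2)) (dDm : (SD0 → F2) →ₗ[F2] (SDm → F2))
    (hC : dCm ∘ₗ dC0 = 0) (hD : dDm ∘ₗ dD0 = 0)
    (ιC : T0 ↪ SC0) (ιD : T0 ↪ SD0)
    (hu : incl ιC 1 ∈ LinearMap.ker dCm) (hu' : incl ιC 1 ∉ LinearMap.range dC0)
    (hv : incl ιD 1 ∈ LinearMap.ker dDm) (hv' : incl ιD 1 ∉ LinearMap.range dD0)
    -- the common logical operator subcomplex V with V₋₁ = 𝔽₂^Tm included in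
    -- C₋₁ and D₋₁ by fm, gm, and common surjective corestriction dV
    (fm : (Tm → F2) →ₗ[F2] (SCm → F2)) (gm : (Tm → F2) →ₗ[F2] (SDm → F2))
    (hfm : Function.Injective fm) (hgm : Function.Injective gm)
    (dV : (T0 → F2) →ₗ[F2] (Tm → F2)) (hdV : Function.Surjective dV)
    (hfC : dCm ∘ₗ incl ιC = fm ∘ₗ dV)
    (hgD : dDm ∘ₗ incl ιD = gm ∘ₗ dV)
    -- separation
    (hsepC : ∀ u' : SC0 → F2, u' ∈ LinearMap.ker dCm → u' ∉ LinearMap.range dC0 →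
      (∀ j, u' j ≠ 0 → incl ιC 1 j ≠ 0) → u' + incl ιC 1 ∈ LinearMap.range dC0)
    (hsepD : ∀ v' : SD0 → F2, v' ∈ LinearMap.ker dDm → v' ∉ LinearMap.range dD0 →
      (∀ j, v' j ≠ 0 → incl ιD 1 j ≠ 0) → v' + incl ιD 1 ∈ LinearMap.range dD0)
    (hsep3 : ∀ s : T0 → F2,
      (incl ιC s ∈ LinearMap.ker dCm ∧ incl ιC s ∉ LinearMap.range dC0) ↔
      (incl ιD s ∈ LinearMap.ker dDm ∧ incl ιD s ∉ LinearMap.range dD0))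
    -- the induced differential ∂₋₁^T of the sandwiched complex T
    (dTm : (((SC0 → F2) × ((((T0 → F2) × ((T0 → F2) × (Tm → F2)))) × (SD0 → F2))) ⧸
        (LinearMap.range ((incl ιC).prod (lW0.prod (0 : (T0 → F2) →ₗ[F2] (SD0 → F2)))) ⊔
         LinearMap.range ((0 : (T0 → F2) →ₗ[F2] (SC0 → F2)).prod (rW0.prod (incl ιD))))) →ₗ[F2]
      (((SCm → F2) × ((((Tm → F2) × (Tm → F2))) × (SDm → F2))) ⧸
        (LinearMap.range (fm.prod (lWm.prod (0 : (Tm → F2) →ₗ[F2] (SDm → F2)))) ⊔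
         LinearMap.range ((0 : (Tm → F2) →ₗ[F2] (SCm → F2)).prod (rWm.prod gm)))))
    (hdTm : dTm ∘ₗ
        (LinearMap.range ((incl ιC).prod (lW0.prod (0 : (T0 → F2) →ₗ[F2] (SD0 → F2)))) ⊔
         LinearMap.range ((0 : (T0 → F2) →ₗ[F2] (SC0 → F2)).prod (rW0.prod (incl ιD)))).mkQ =
      (LinearMap.range (fm.prod (lWm.prod (0 : (Tm → F2) →ₗ[F2] (SDm → F2)))) ⊔
         LinearMap.range ((0 : (Tm → F2) →ₗ[F2] (SCm → F2)).prod (rWm.prod gm))).mkQ ∘ₗ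
        (dCm.prodMap ((sandDm dV).prodMap dDm))) :
    -- n_T = n_C + n_D + r
    Module.finrank F2
        (((SC0 → F2) × ((((T0 → F2) × ((T0 → F2) × (Tm → F2)))) × (SD0 → F2))) ⧸
          (LinearMap.range ((incl ιC).prod (lW0.prod (0 : (T0 → F2) →ₗ[F2] (SD0 → F2)))) ⊔
           LinearMap.range ((0 : (T0 → F2) →ₗ[F2] (SC0 → F2)).prod (rW0.prod (incl ιD))))) =
      Fintype.card SC0 + Fintype.card SD0 + Fintype.card Tm ∧
    -- k_T = k_C + k_D − 1
    Module.finrank F2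
        (LinearMap.ker dTm ⧸
          ((LinearMap.range
              ((LinearMap.range ((incl ιC).prod (lW0.prod (0 : (T0 → F2) →ₗ[F2] (SD0 → F2)))) ⊔
                LinearMap.range ((0 : (T0 → F2) →ₗ[F2] (SC0 → F2)).prod
                  (rW0.prod (incl ιD)))).mkQ ∘ₗ
              (dC0.prodMap ((sandD0 dV).prodMap dD0)))).comap
            (LinearMap.ker dTm).subtype :
            Submodule F2 (LinearMap.ker dTm))) + 1 =
      Module.finrank F2
          (LinearMap.ker dCm ⧸
            ((LinearMap.range dC0).comap (LinearMap.ker dCm).subtype :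
              Submodule F2 (LinearMap.ker dCm))) +
        Module.finrank F2
          (LinearMap.ker dDm ⧸
            ((LinearMap.range dD0).comap (LinearMap.ker dDm).subtype :
              Submodule F2 (LinearMap.ker dDm))) := 
  sandwiched_code_dims_helper dC0 dCm dD0 dDm hC hD ιC ιD hu hu' hv hv' fm gm hfm hgm
    dV hdV hfC hgD hsepC hsepD hsep3 dTm hdTm
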